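/- arXiv:2502.06879 — 2 statements merged into one kernel-verified Lean document; each statement's English description precedes it below -/
import Mathlib

section
/- Modularity is invariant under expansion: for any clustering C' of the quotient graph G_Q, the expanded clustering Ĉ of G, defined by Ĉ_j = ⋃_{v'_i ∈ C'_j} C_i, satisfies Q_G(Ĉ) = Q_{G_Q}(C'). -/
open Finset

noncomputable section

variable {V : Type*} [Fintype V] [DecidableEq V]

/-- Total edge weight of the graph (each undirected edge counted once). -/
def totalWeight (w : V → V → ℝ) : ℝ := (∑ u, ∑ v, w u v) / 2

/-- Weighted degree of a node. -/
def deg (w : V → V → ℝ) (v : V) : ℝ := ∑ u, w v u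

/-- Volume of a cluster. -/
def vol (w : V → V → ℝ) (S : Finset V) : ℝ := ∑ v ∈ S, deg w v

/-- Total intra-cluster edge weight of `S` (each undirected edge counted once). -/
def intra (w : V → V → ℝ) (S : Finset V) : ℝ := (∑ u ∈ S, ∑ v ∈ S, w u v) / 2

/-- Total weight of edges between clusters `S` and `T`. -/
def interW (w : V → V → ℝ) (S T : Finset V) : ℝ := ∑ u ∈ S, ∑ v ∈ T, w u v

/-- Total weight of edges between node `v` and cluster `S`. -/
def Kv (w : V → V → ℝ) (v : V) (S : Finset V) : ℝ := ∑ u ∈ S, w v u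

/-- Modularity of a collection of clusters:
`Q = Σ_i (K_{C_i→C_i}/m − (vol(C_i)/(2m))²)`. -/
def modularityOf (w : V → V → ℝ) (parts : Finset (Finset V)) : ℝ :=
  ∑ S ∈ parts, (intra w S / totalWeight w - (vol w S / (2 * totalWeight w)) ^ 2)

/-- Modularity of a clustering (partition of the vertex set). -/
def modularity (w : V → V → ℝ) (P : Finpartition (univ : Finset V)) : ℝ :=
  modularityOf w P.parts

/-- Total edge weight of the quotient graph (self-loops counted once). -/
def quotTotal (w : V → V → ℝ) (P : Finpartition (univ : Finset V)) : ℝ :=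
  (∑ S ∈ P.parts, intra w S) + (∑ S ∈ P.parts, ∑ T ∈ P.parts \ {S}, interW w S T) / 2

/-- Weighted degree of a supernode of the quotient graph (self-loops twice). -/
def quotDeg (w : V → V → ℝ) (P : Finpartition (univ : Finset V)) (S : Finset V) : ℝ :=
  2 * intra w S + ∑ T ∈ P.parts \ {S}, interW w S T

/-- Intra-cluster weight, inside the quotient graph, of a cluster `B` of
supernodes: self-loops contribute their weight once, edges between distinct
supernodes of `B` once each. -/
def blockIntra (w : V → V → ℝ) (B : Finset (Finset V)) : ℝ :=
  (∑ S ∈ B, intra w S) + (∑ S ∈ B, ∑ T ∈ B \ {S}, interW w S T) / 2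

/-- Volume, inside the quotient graph, of a cluster `B` of supernodes. -/
def blockVol (w : V → V → ℝ) (P : Finpartition (univ : Finset V))
    (B : Finset (Finset V)) : ℝ := ∑ S ∈ B, quotDeg w P S

/-- Sum over a disjoint union of parts. -/
lemma sum_sup_eq {P : Finpartition (univ : Finset V)} {B : Finset (Finset V)}
    (hB : B ⊆ P.parts) (f : V → ℝ) :
    ∑ x ∈ B.sup id, f x = ∑ S ∈ B, ∑ x ∈ S, f x := by
  rw [Finset.sup_eq_biUnion,
    Finset.sum_biUnion (P.supIndep.pairwiseDisjoint.subset (Finset.coe_subset.2 hB))]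
  rfl

lemma interW_split {B : Finset (Finset V)} (f : Finset V → Finset V → ℝ) :
    ∑ S ∈ B, ∑ T ∈ B, f S T
      = ∑ S ∈ B, f S S + ∑ S ∈ B, ∑ T ∈ B \ {S}, f S T := by
  rw [← Finset.sum_add_distrib]
  refine Finset.sum_congr rfl fun S hS => ?_
  rw [Finset.sdiff_singleton_eq_erase, Finset.add_sum_erase _ _ hS]

lemma intra_sup_eq {P : Finpartition (univ : Finset V)} {B : Finset (Finset V)}
    (hB : B ⊆ P.parts) (w : V → V → ℝ) :
    intra w (B.sup id) = blockIntra w B := by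
  have h : ∑ u ∈ B.sup id, ∑ v ∈ B.sup id, w u v
      = ∑ S ∈ B, ∑ T ∈ B, interW w S T := by
    rw [sum_sup_eq hB]
    refine Finset.sum_congr rfl fun S _ => ?_
    calc ∑ u ∈ S, ∑ v ∈ B.sup id, w u v
        = ∑ u ∈ S, ∑ T ∈ B, ∑ v ∈ T, w u v :=
          Finset.sum_congr rfl fun u _ => sum_sup_eq hB _
      _ = ∑ T ∈ B, ∑ u ∈ S, ∑ v ∈ T, w u v := Finset.sum_comm
      _ = ∑ T ∈ B, interW w S T := rfl
  have h2 : ∑ S ∈ B, interW w S S = 2 * ∑ S ∈ B, intra w S := by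
    rw [Finset.mul_sum]
    exact Finset.sum_congr rfl fun S _ => by rw [interW, intra]; ring
  rw [intra, h, interW_split (interW w), h2, blockIntra]
  ring

lemma quotDeg_eq {P : Finpartition (univ : Finset V)} {S : Finset V}
    (hS : S ∈ P.parts) (w : V → V → ℝ) :
    quotDeg w P S = vol w S := by
  have h : vol w S = ∑ T ∈ P.parts, interW w S T := by
    rw [vol]
    have : ∀ v : V, deg w v = ∑ T ∈ P.parts, ∑ u ∈ T, w v u := fun v => by
      rw [deg, ← sum_sup_eq (le_refl P.parts) (w v), P.sup_parts]
    rw [Finset.sum_congr rfl fun v _ => this v, Finset.sum_comm]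
    rfl
  have h2 : ∑ T ∈ P.parts, interW w S T
      = interW w S S + ∑ T ∈ P.parts \ {S}, interW w S T := by
    rw [Finset.sdiff_singleton_eq_erase, Finset.add_sum_erase _ _ hS]
  have h3 : interW w S S = 2 * intra w S := by rw [interW, intra]; ring
  rw [quotDeg, h, h2, h3]

lemma vol_sup_eq {P : Finpartition (univ : Finset V)} {B : Finset (Finset V)}
    (hB : B ⊆ P.parts) (w : V → V → ℝ) :
    vol w (B.sup id) = blockVol w P B := by
  rw [vol, sum_sup_eq hB, blockVol]
  exact Finset.sum_congr rfl fun S hS => (quotDeg_eq (hB hS) w).symm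

lemma quotTotal_eq (P : Finpartition (univ : Finset V)) (w : V → V → ℝ) :
    quotTotal w P = totalWeight w := by
  have h := intra_sup_eq (le_refl P.parts) w
  rw [P.sup_parts] at h
  rw [quotTotal, ← blockIntra, ← h]; rfl

/-- modularity is invariant under expansion: for any clustering `D`
of the quotient graph `G_Q`, its modularity in `G_Q` equals the modularity in `G`
of the expanded clustering whose blocks are `⋃_{v'_i ∈ B} C_i = B.sup id`. -/
theorem modularity_invariant_under_expansion (w : V → V → ℝ)
    (hsymm : ∀ u v, w u v = w v u) (hpos : ∀ u v, 0 ≤ w u v)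
    (hloop : ∀ v, w v v = 0) (P : Finpartition (univ : Finset V))
    (D : Finpartition P.parts) :
    ∑ B ∈ D.parts, (blockIntra w B / quotTotal w P
        - (blockVol w P B / (2 * quotTotal w P)) ^ 2)
      = ∑ B ∈ D.parts, (intra w (B.sup id) / totalWeight w
        - (vol w (B.sup id) / (2 * totalWeight w)) ^ 2) := by
  refine Finset.sum_congr rfl fun B hB => ?_
  have hBP : B ⊆ P.parts := D.le hB
  rw [intra_sup_eq hBP, vol_sup_eq hBP, quotTotal_eq]
end
end

section
/- Composition of contractions preserves modularity: if C is a clustering of G with quotient graph G_Q, and C' is a clustering of G_Q with quotient graph (G_Q)_{Q'}, then (G_Q)_{Q'} is isomorphic (as a weighted graph with self-loops) to the quotient graph of G by the expanded clustering Ĉ; in particular the modularity of the singleton clustering of (G_Q)_{Q'} equals Q_G(Ĉ). -/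
open Finset

noncomputable section

variable {V : Type*} [Fintype V] [DecidableEq V]

/-- Edge weights of the quotient graph `G_Q` (self-loops record intra weight). -/
def wq (w : V → V → ℝ) (S T : Finset V) : ℝ :=
  if S = T then intra w S else interW w S T

/-- Intra-cluster weight, inside `G_Q`, of a cluster `B` of supernodes:
self-loops of `G_Q` contribute their weight, edges between distinct supernodes
of `B` are counted once. This is the self-loop weight of the supernode of the
second quotient `(G_Q)_{Q'}` corresponding to `B`. -/
def qqIntra (w : V → V → ℝ) (B : Finset (Finset V)) : ℝ :=
  (∑ S ∈ B, wq w S S) + (∑ S ∈ B, ∑ T ∈ B \ {S}, wq w S T) / 2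

/-- Inter-cluster weight in `G_Q` between two clusters of supernodes: the edge
weight in `(G_Q)_{Q'}` between the corresponding supernodes. -/
def qqInter (w : V → V → ℝ) (B B' : Finset (Finset V)) : ℝ :=
  ∑ S ∈ B, ∑ T ∈ B', wq w S T

/-- Total edge weight of the second quotient graph `(G_Q)_{Q'}`. -/
def qqTotal (w : V → V → ℝ) (parts : Finset (Finset (Finset V))) : ℝ :=
  (∑ B ∈ parts, qqIntra w B) + (∑ B ∈ parts, ∑ B' ∈ parts \ {B}, qqInter w B B') / 2

/-- Weighted degree of a supernode of `(G_Q)_{Q'}` (self-loops twice). -/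
def qqDeg (w : V → V → ℝ) (parts : Finset (Finset (Finset V)))
    (B : Finset (Finset V)) : ℝ :=
  2 * qqIntra w B + ∑ B' ∈ parts \ {B}, qqInter w B B'

/-- Sum over the union of a pairwise disjoint family. -/
lemma sum_pdisj {α M : Type*} [DecidableEq α] [AddCommMonoid M] {B : Finset (Finset α)}
    (hd : (↑B : Set (Finset α)).PairwiseDisjoint id) (f : α → M) :
    ∑ x ∈ B.sup id, f x = ∑ S ∈ B, ∑ x ∈ S, f x := by
  rw [Finset.sup_eq_biUnion, Finset.sum_biUnion hd]
  rfl

lemma interW_sup (w : V → V → ℝ) {B B' : Finset (Finset V)}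
    (hd : (↑B : Set (Finset V)).PairwiseDisjoint id)
    (hd' : (↑B' : Set (Finset V)).PairwiseDisjoint id) :
    interW w (B.sup id) (B'.sup id) = ∑ S ∈ B, ∑ T ∈ B', interW w S T := by
  unfold interW
  rw [sum_pdisj hd]
  refine Finset.sum_congr rfl fun S _ => ?_
  rw [show (∑ u ∈ S, ∑ v ∈ B'.sup id, w u v) = ∑ u ∈ S, ∑ T ∈ B', ∑ v ∈ T, w u v from
    Finset.sum_congr rfl fun u _ => sum_pdisj hd' (w u), Finset.sum_comm]

lemma interW_self (w : V → V → ℝ) (S : Finset V) : interW w S S = 2 * intra w S := by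
  unfold interW intra; ring

lemma qqIntra_eq' (w : V → V → ℝ) {B : Finset (Finset V)}
    (hd : (↑B : Set (Finset V)).PairwiseDisjoint id) :
    qqIntra w B = intra w (B.sup id) := by
  unfold qqIntra intra
  rw [show (∑ u ∈ B.sup id, ∑ v ∈ B.sup id, w u v) = ∑ S ∈ B, ∑ T ∈ B, interW w S T from
    interW_sup w hd hd]
  have h1 : ∑ S ∈ B, wq w S S = ∑ S ∈ B, intra w S :=
    Finset.sum_congr rfl fun S _ => if_pos rfl
  have h2 : ∑ S ∈ B, ∑ T ∈ B \ {S}, wq w S T = ∑ S ∈ B, ∑ T ∈ B \ {S}, interW w S T := by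
    refine Finset.sum_congr rfl fun S _ => Finset.sum_congr rfl fun T hT => ?_
    have : T ≠ S := by simpa using (Finset.mem_sdiff.mp hT).2
    exact if_neg fun h => this h.symm
  have h3 : ∑ S ∈ B, ∑ T ∈ B, interW w S T
      = ∑ S ∈ B, (∑ T ∈ B \ {S}, interW w S T + 2 * intra w S) := by
    refine Finset.sum_congr rfl fun S hS => ?_
    rw [← interW_self, ← Finset.sum_eq_sum_sdiff_singleton_add hS (interW w S)]
  rw [h1, h2, h3, Finset.sum_add_distrib, ← Finset.mul_sum]
  ring

lemma qqInter_eq' (w : V → V → ℝ) {B B' : Finset (Finset V)}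
    (hd : (↑B : Set (Finset V)).PairwiseDisjoint id)
    (hd' : (↑B' : Set (Finset V)).PairwiseDisjoint id)
    (hdis : ∀ S ∈ B, S ∉ B') :
    qqInter w B B' = interW w (B.sup id) (B'.sup id) := by
  rw [interW_sup w hd hd']
  refine Finset.sum_congr rfl fun S hS => Finset.sum_congr rfl fun T hT => ?_
  exact if_neg fun h => hdis S hS (by rw [h]; exact hT)

section Main

variable (w : V → V → ℝ) (P : Finpartition (univ : Finset V)) (D : Finpartition P.parts)

lemma block_pdisj {B : Finset (Finset V)} (hB : B ⊆ P.parts) :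
    (↑B : Set (Finset V)).PairwiseDisjoint id :=
  P.disjoint.subset (by exact_mod_cast hB)

lemma sum_univ_blocks (f : V → ℝ) :
    ∑ v, f v = ∑ B ∈ D.parts, ∑ v ∈ B.sup id, f v := by
  have h1 : ∑ v ∈ P.parts.sup id, f v = ∑ S ∈ P.parts, ∑ v ∈ S, f v := sum_pdisj P.disjoint f
  rw [P.sup_parts] at h1
  have h2 : ∑ S ∈ D.parts.sup id, ∑ v ∈ S, f v
      = ∑ B ∈ D.parts, ∑ S ∈ B, ∑ v ∈ S, f v := sum_pdisj D.disjoint _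
  rw [D.sup_parts] at h2
  rw [h1, h2]
  exact Finset.sum_congr rfl fun B hB => (sum_pdisj (block_pdisj P (D.le hB)) f).symm

lemma blocks_notmem {B B' : Finset (Finset V)} (hB : B ∈ D.parts) (hB' : B' ∈ D.parts)
    (hne : B ≠ B') : ∀ S ∈ B, S ∉ B' :=
  fun S hS hS' => Finset.disjoint_left.mp (D.disjoint hB hB' hne) hS hS'

lemma vol_block {B : Finset (Finset V)} (hB : B ∈ D.parts) :
    vol w (B.sup id) = 2 * intra w (B.sup id)
      + ∑ B' ∈ D.parts \ {B}, interW w (B.sup id) (B'.sup id) := by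
  have hvol : vol w (B.sup id) = ∑ B' ∈ D.parts, interW w (B.sup id) (B'.sup id) := by
    unfold vol deg
    rw [show (∑ v ∈ B.sup id, ∑ u, w v u)
        = ∑ v ∈ B.sup id, ∑ B' ∈ D.parts, ∑ u ∈ B'.sup id, w v u from
      Finset.sum_congr rfl fun v _ => sum_univ_blocks P D (w v), Finset.sum_comm]
    rfl
  rw [hvol, Finset.sum_eq_sum_sdiff_singleton_add hB
    (fun B' => interW w (B.sup id) (B'.sup id)), interW_self]
  ring

lemma qqTotal_eq : qqTotal w D.parts = totalWeight w := by
  unfold qqTotal totalWeight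
  have key : ∑ u, ∑ v, w u v = ∑ B ∈ D.parts, vol w (B.sup id) := by
    rw [sum_univ_blocks P D (fun u => ∑ v, w u v)]
    refine Finset.sum_congr rfl fun B _ => ?_
    unfold vol deg
    rfl
  have h1 : ∑ B ∈ D.parts, qqIntra w B = ∑ B ∈ D.parts, intra w (B.sup id) :=
    Finset.sum_congr rfl fun B hB => qqIntra_eq' w (block_pdisj P (D.le hB))
  have h2 : ∑ B ∈ D.parts, ∑ B' ∈ D.parts \ {B}, qqInter w B B'
      = ∑ B ∈ D.parts, ∑ B' ∈ D.parts \ {B}, interW w (B.sup id) (B'.sup id) := by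
    refine Finset.sum_congr rfl fun B hB => Finset.sum_congr rfl fun B' hB' => ?_
    obtain ⟨hB'm, hne⟩ := Finset.mem_sdiff.mp hB'
    have hne' : B ≠ B' := by intro h; exact hne (by simp [h])
    exact qqInter_eq' w (block_pdisj P (D.le hB)) (block_pdisj P (D.le hB'm))
      (blocks_notmem P D hB hB'm hne')
  have h3 : ∑ B ∈ D.parts, vol w (B.sup id)
      = 2 * (∑ B ∈ D.parts, intra w (B.sup id))
      + ∑ B ∈ D.parts, ∑ B' ∈ D.parts \ {B}, interW w (B.sup id) (B'.sup id) := by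
    rw [Finset.mul_sum, ← Finset.sum_add_distrib]
    exact Finset.sum_congr rfl fun B hB => vol_block w P D hB
  rw [h1, h2, key, h3]
  ring

lemma qqDeg_eq {B : Finset (Finset V)} (hB : B ∈ D.parts) :
    qqDeg w D.parts B = vol w (B.sup id) := by
  unfold qqDeg
  rw [vol_block w P D hB, qqIntra_eq' w (block_pdisj P (D.le hB))]
  congr 1
  refine Finset.sum_congr rfl fun B' hB' => ?_
  obtain ⟨hB'm, hne⟩ := Finset.mem_sdiff.mp hB'
  have hne' : B ≠ B' := by intro h; exact hne (by simp [h])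
  exact qqInter_eq' w (block_pdisj P (D.le hB)) (block_pdisj P (D.le hB'm))
    (blocks_notmem P D hB hB'm hne')

lemma sup_injective {B B' : Finset (Finset V)} (hB : B ∈ D.parts) (hB' : B' ∈ D.parts)
    (h : B.sup id = B'.sup id) : B = B' := by
  have key : ∀ {X Y : Finset (Finset V)}, X ∈ D.parts → Y ∈ D.parts →
      X.sup id = Y.sup id → X ⊆ Y := by
    intro X Y hX hY hXY S hS
    have hSP : S ∈ P.parts := D.le hX hS
    obtain ⟨v, hv⟩ := P.nonempty_of_mem_parts hSP
    have hvX : v ∈ X.sup id := Finset.mem_sup.mpr ⟨S, hS, hv⟩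
    rw [hXY, Finset.mem_sup] at hvX
    obtain ⟨T, hT, hvT⟩ := hvX
    rwa [P.eq_of_mem_parts hSP (D.le hY hT) hv hvT]
  exact subset_antisymm (key hB hB' h) (key hB' hB h.symm)

end Main

/-- composition of contractions preserves modularity. Let `P` be a
clustering of `G` with quotient graph `G_Q`, and `D` a clustering of `G_Q` with
quotient `(G_Q)_{Q'}`. Then the map `B ↦ B.sup id` (sending a supernode of
`(G_Q)_{Q'}` to the corresponding expanded block `Ĉ_B ⊆ V`) is an isomorphism of
weighted graphs with self-loops between `(G_Q)_{Q'}` and the quotient of `G` by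
the expanded clustering `Ĉ`; in particular the modularity of the singleton
clustering of `(G_Q)_{Q'}` equals `Q_G(Ĉ)`. -/
theorem quotient_composition (w : V → V → ℝ)
    (hsymm : ∀ u v, w u v = w v u) (hpos : ∀ u v, 0 ≤ w u v)
    (hloop : ∀ v, w v v = 0) (hm : 0 < totalWeight w)
    (P : Finpartition (univ : Finset V)) (D : Finpartition P.parts) :
    (∀ B ∈ D.parts, ∀ B' ∈ D.parts, B.sup id = B'.sup id → B = B') ∧
    (∀ B ∈ D.parts, qqIntra w B = intra w (B.sup id)) ∧
    (∀ B ∈ D.parts, ∀ B' ∈ D.parts, B ≠ B' →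
        qqInter w B B' = interW w (B.sup id) (B'.sup id)) ∧
    (∑ B ∈ D.parts, (qqIntra w B / qqTotal w D.parts
          - (qqDeg w D.parts B / (2 * qqTotal w D.parts)) ^ 2)
        = ∑ B ∈ D.parts, (intra w (B.sup id) / totalWeight w
          - (vol w (B.sup id) / (2 * totalWeight w)) ^ 2)) := by
  refine ⟨fun B hB B' hB' h => sup_injective P D hB hB' h,
    fun B hB => qqIntra_eq' w (block_pdisj P (D.le hB)),
    fun B hB B' hB' hne => qqInter_eq' w (block_pdisj P (D.le hB))
      (block_pdisj P (D.le hB')) (blocks_notmem P D hB hB' hne), ?_⟩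
  refine Finset.sum_congr rfl fun B hB => ?_
  rw [qqTotal_eq w P D, qqIntra_eq' w (block_pdisj P (D.le hB)), qqDeg_eq w P D hB]
end
end
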